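/- arXiv:2306.02241 — 3 statements merged into one kernel-verified Lean document; each statement's English description precedes it below -/
import Mathlib

section
/- Ramanujan's identity: Li₂(1/3) − (1/6)·Li₂(1/9) = π²/18 − (1/6)·(log 3)². -/
/-!
Termwise differentiation gives `Li₂'(x) = -log(1 - x) / x`, from which Landen's identity
`Li₂(x) + Li₂(-x/(1-x)) = -½ log²(1 - x)` follows by the mean value theorem, and splitting the
series into even and odd terms gives the duplication formula `Li₂(x) + Li₂(-x) = ½ Li₂(x²)`.
Landen at `x = 1/2` and duplication at `x = 1` (with `Li₂(1) = ζ(2)`) evaluate `Li₂(1/2)`;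
Landen at `1/3`, `1/4` and duplication at `1/2`, `1/3` then form a linear system in
`Li₂(±1/3), Li₂(-1/2), Li₂(1/4), Li₂(1/9)` from which the identity is eliminated.
-/

noncomputable def Li2 (z : ℝ) : ℝ := ∑' n : ℕ, z ^ (n + 1) / ((n : ℝ) + 1) ^ 2

open Real Set

lemma summable_one_div_nat_add_one_sq : Summable fun n : ℕ => 1 / ((n : ℝ) + 1) ^ 2 := by
  simpa using (summable_nat_add_iff 1).mpr (Real.summable_one_div_nat_pow.mpr one_lt_two)

lemma norm_Li2_term_le {x : ℝ} (hx : |x| ≤ 1) (n : ℕ) :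
    ‖x ^ (n + 1) / ((n : ℝ) + 1) ^ 2‖ ≤ 1 / ((n : ℝ) + 1) ^ 2 := by
  rw [norm_div, norm_pow, norm_of_nonneg (by positivity : (0 : ℝ) ≤ ((n : ℝ) + 1) ^ 2)]
  gcongr
  exact pow_le_one₀ (norm_nonneg x) hx

lemma hasSum_Li2 {x : ℝ} (hx : |x| ≤ 1) :
    HasSum (fun n : ℕ => x ^ (n + 1) / ((n : ℝ) + 1) ^ 2) (Li2 x) :=
  (Summable.of_norm_bounded summable_one_div_nat_add_one_sq (norm_Li2_term_le hx)).hasSum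

lemma continuousOn_Li2 : ContinuousOn Li2 (Icc (-1) 1) :=
  continuousOn_tsum (fun n => (continuousOn_id.pow (n + 1)).div_const _)
    summable_one_div_nat_add_one_sq fun n _ hx => norm_Li2_term_le (abs_le.mpr hx) n

@[simp]
lemma Li2_zero : Li2 0 = 0 := by
  simp [Li2]

lemma Li2_one : Li2 1 = π ^ 2 / 6 := by
  have h := (hasSum_nat_add_iff' 1).mpr hasSum_zeta_two
  simp only [Finset.range_one, Finset.sum_singleton] at h
  simpa [Li2] using h.tsum_eq

lemma Li2_add_Li2_neg {x : ℝ} (hx : |x| ≤ 1) : Li2 x + Li2 (-x) = Li2 (x ^ 2) / 2 := by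
  have hx2 : |x ^ 2| ≤ 1 := by rw [abs_pow]; exact pow_le_one₀ (abs_nonneg x) hx
  set f : ℕ → ℝ := fun n => x ^ (n + 1) / ((n : ℝ) + 1) ^ 2 + (-x) ^ (n + 1) / ((n : ℝ) + 1) ^ 2
  have hsum : HasSum f (Li2 x + Li2 (-x)) := (hasSum_Li2 hx).add (hasSum_Li2 (by rwa [abs_neg]))
  -- odd powers cancel, even powers double
  have heven : HasSum (fun k => f (2 * k)) 0 := by
    convert hasSum_zero with k
    simp only [f, (odd_two_mul_add_one k).neg_pow]
    ring
  have hodd : HasSum (fun k => f (2 * k + 1)) (Li2 (x ^ 2) / 2) := by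
    refine ((hasSum_Li2 hx2).div_const 2).congr_fun fun k => ?_
    simp only [f]
    rw [Even.neg_pow ⟨k + 1, by ring⟩, ← pow_mul]
    push_cast
    field_simp
    ring
  simpa using hsum.unique (heven.even_add_odd hodd)

lemma hasDerivAt_Li2_of_abs_lt_one {x : ℝ} (hx : |x| < 1) :
    HasDerivAt Li2 (∑' n : ℕ, x ^ n / ((n : ℝ) + 1)) x := by
  -- differentiate termwise on `(-r, r)`, where the derived series is dominated by `∑ r ^ n`
  set r := (|x| + 1) / 2
  have hxr : |x| < r := by simp only [r]; linarith
  have hr1 : r < 1 := by simp only [r]; linarith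
  have hterm (n : ℕ) (y : ℝ) :
      HasDerivAt (fun z : ℝ => z ^ (n + 1) / ((n : ℝ) + 1) ^ 2) (y ^ n / ((n : ℝ) + 1)) y := by
    refine ((hasDerivAt_pow (n + 1) y).div_const (((n : ℝ) + 1) ^ 2)).congr_deriv ?_
    push_cast
    field_simp
  have hbound (n : ℕ) (y : ℝ) (hy : y ∈ Ioo (-r) r) : ‖y ^ n / ((n : ℝ) + 1)‖ ≤ r ^ n := by
    rw [norm_div, norm_pow, norm_of_nonneg (by positivity : (0 : ℝ) ≤ (n : ℝ) + 1)]
    calc ‖y‖ ^ n / ((n : ℝ) + 1) ≤ ‖y‖ ^ n :=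
          div_le_self (by positivity) (by linarith [n.cast_nonneg (α := ℝ)])
      _ ≤ r ^ n := by gcongr; exact (abs_lt.mpr hy).le
  exact hasDerivAt_tsum_of_isPreconnected (summable_geometric_of_lt_one (by positivity) hr1)
    isOpen_Ioo isPreconnected_Ioo (fun n y _ => hterm n y) hbound (abs_lt.mp hxr)
    (hasSum_Li2 hx.le).summable (abs_lt.mp hxr)

lemma hasSum_pow_div_succ {x : ℝ} (hx : |x| < 1) (hx0 : x ≠ 0) :
    HasSum (fun n : ℕ => x ^ n / ((n : ℝ) + 1)) (-log (1 - x) / x) := by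
  refine ((hasSum_pow_div_log_of_abs_lt_one hx).div_const x).congr_fun fun n => ?_
  field_simp
  ring

lemma hasDerivAt_Li2 {x : ℝ} (hx : |x| < 1) (hx0 : x ≠ 0) :
    HasDerivAt Li2 (-log (1 - x) / x) x :=
  (hasSum_pow_div_succ hx hx0).tsum_eq ▸ hasDerivAt_Li2_of_abs_lt_one hx

lemma hasDerivAt_Li2_add_Li2_neg_div_one_sub {y : ℝ} (hy0 : 0 < y) (hy1 : y < 1 / 2) :
    HasDerivAt (fun y => Li2 y + Li2 (-y / (1 - y)) + log (1 - y) ^ 2 / 2) 0 y := by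
  have hy : 0 < 1 - y := by linarith
  set u := -y / (1 - y) with hu
  have hu_abs : |u| < 1 := abs_lt.mpr
    ⟨by rw [hu, lt_div_iff₀ hy]; linarith, by rw [hu, div_lt_iff₀ hy]; linarith⟩
  have hu0 : u ≠ 0 := (div_neg_of_neg_of_pos (by linarith) hy).ne
  have hmob : HasDerivAt (fun y : ℝ => -y / (1 - y)) (-1 / (1 - y) ^ 2) y := by
    refine ((hasDerivAt_neg y).div ((hasDerivAt_id y).const_sub 1) hy.ne').congr_deriv ?_
    simp only [id]
    ring
  have hlog : HasDerivAt (fun y => log (1 - y) ^ 2 / 2) (-log (1 - y) / (1 - y)) y := by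
    refine ((((hasDerivAt_id y).const_sub 1).log hy.ne').pow 2 |>.div_const 2).congr_deriv ?_
    simp only [id]
    ring
  refine (((hasDerivAt_Li2 (abs_lt.mpr ⟨by linarith, by linarith⟩) hy0.ne').add
    ((hasDerivAt_Li2 hu_abs hu0).comp y hmob)).add hlog).congr_deriv ?_
  rw [show 1 - u = (1 - y)⁻¹ by rw [hu]; field_simp; ring, log_inv, hu]
  field_simp
  ring

lemma Li2_add_Li2_neg_div_one_sub {x : ℝ} (hx0 : 0 ≤ x) (hx1 : x ≤ 1 / 2) :
    Li2 x + Li2 (-x / (1 - x)) = -(log (1 - x) ^ 2 / 2) := by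
  set g := fun y => Li2 y + Li2 (-y / (1 - y)) + log (1 - y) ^ 2 / 2
  suffices g x = 0 by simp only [g] at this; linarith
  rcases hx0.eq_or_lt with rfl | hx0
  · simp [g]
  have hsub : ∀ y ∈ Icc 0 x, 1 - y ≠ 0 := fun y hy => by linarith [hy.2]
  have hmaps : MapsTo (fun y : ℝ => -y / (1 - y)) (Icc 0 x) (Icc (-1) 1) := fun y hy => by
    have : 0 < 1 - y := by linarith [hy.2]
    exact ⟨by rw [le_div_iff₀ this]; linarith [hy.2], by rw [div_le_iff₀ this]; linarith [hy.1]⟩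
  have hcont : ContinuousOn g (Icc 0 x) := by
    refine ((continuousOn_Li2.mono ?_).add (continuousOn_Li2.comp ?_ hmaps)).add ?_
    · exact Icc_subset_Icc (by norm_num) (by linarith)
    · exact continuousOn_id.neg.div (continuousOn_const.sub continuousOn_id) hsub
    · exact ((continuousOn_const.sub continuousOn_id).log hsub).pow 2 |>.div_const 2
  obtain ⟨c, -, hc⟩ := exists_hasDerivAt_eq_slope g (fun _ => 0) hx0 hcont
    fun c hc => hasDerivAt_Li2_add_Li2_neg_div_one_sub hc.1 (hc.2.trans_le hx1)
  have hg0 : g 0 = 0 := by simp [g]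
  rw [hg0, sub_zero, sub_zero, eq_comm, div_eq_zero_iff] at hc
  exact hc.resolve_right hx0.ne'

lemma Li2_neg_one : Li2 (-1) = -(π ^ 2 / 12) := by
  have h := Li2_add_Li2_neg (x := 1) (by norm_num)
  rw [one_pow, Li2_one] at h
  linarith

lemma Li2_one_half : Li2 (1 / 2) = π ^ 2 / 12 - log 2 ^ 2 / 2 := by
  have h := Li2_add_Li2_neg_div_one_sub (x := 1 / 2) (by norm_num) le_rfl
  rw [show -(1 / 2 : ℝ) / (1 - 1 / 2) = -1 by norm_num, Li2_neg_one,
    show (1 : ℝ) - 1 / 2 = 2⁻¹ by norm_num, log_inv] at h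
  linarith

theorem ramanujan_li2_third :
    Li2 (1 / 3) - (1 / 6) * Li2 (1 / 9) = Real.pi ^ 2 / 18 - (1 / 6) * Real.log 3 ^ 2 := by
  have landen_third := Li2_add_Li2_neg_div_one_sub (x := 1 / 3) (by norm_num) (by norm_num)
  have landen_quarter := Li2_add_Li2_neg_div_one_sub (x := 1 / 4) (by norm_num) (by norm_num)
  have dup_half := Li2_add_Li2_neg (x := 1 / 2) (by norm_num [abs_of_pos])
  have dup_third := Li2_add_Li2_neg (x := 1 / 3) (by norm_num [abs_of_pos])
  rw [show -(1 / 3 : ℝ) / (1 - 1 / 3) = -(1 / 2) by norm_num,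
    show (1 : ℝ) - 1 / 3 = 2 / 3 by norm_num, log_div two_ne_zero three_ne_zero] at landen_third
  rw [show -(1 / 4 : ℝ) / (1 - 1 / 4) = -(1 / 3) by norm_num,
    show (1 : ℝ) - 1 / 4 = 3 / 2 ^ 2 by norm_num, log_div three_ne_zero (by norm_num),
    log_pow] at landen_quarter
  rw [show (1 / 2 : ℝ) ^ 2 = 1 / 4 by norm_num, Li2_one_half] at dup_half
  rw [show (1 / 3 : ℝ) ^ 2 = 1 / 9 by norm_num] at dup_third
  push_cast at landen_quarter
  linear_combination (2 / 3) * landen_third - (1 / 3) * landen_quarter - (2 / 3) * dup_half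
    + (1 / 3) * dup_third
end

section
/- Li₃(1/2) = (7/8)·ζ(3) − (π²/12)·log 2 + (1/6)·(log 2)³. -/
/-!
On `[1/2, 1]` Landen's identity

  `Li₃ x + Li₃ (1 - x) + Li₃ (1 - 1/x) = ζ(3) + (log x)³/6 + (π²/6) log x - (log x)² log (1 - x)/2`

holds: both sides agree at `x = 1`, and their derivatives agree by Euler's reflection formula
`Li₂ x + Li₂ (1 - x) = π²/6 - log x log (1 - x)` and Landen's formula
`Li₂ (y/(y - 1)) = -Li₂ y - (log (1 - y))²/2` for the dilogarithm, which are proved in the same way.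
At `x = 1/2` the left side is `2 Li₃(1/2) + Li₃(-1)`, and the duplication formula
`Li₃ z + Li₃ (-z) = Li₃ (z²)/4` gives `Li₃(-1) = -(3/4) ζ(3)`.
-/

noncomputable def Li3 (z : ℝ) : ℝ := ∑' n : ℕ, z ^ (n + 1) / ((n : ℝ) + 1) ^ 3

open Real Set Filter Topology

noncomputable def polylog (k : ℕ) (z : ℝ) : ℝ := ∑' n : ℕ, z ^ (n + 1) / ((n : ℝ) + 1) ^ k

lemma eq_of_hasDerivAt_zero {f : ℝ → ℝ} {a b : ℝ} (hab : a ≤ b) (hf : ContinuousOn f (Icc a b))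
    (hf' : ∀ x ∈ Ioo a b, HasDerivAt f 0 x) : f a = f b := by
  rcases hab.eq_or_lt with rfl | hab
  · rfl
  obtain ⟨c, -, hc⟩ := exists_hasDerivAt_eq_slope f (fun _ => 0) hab hf hf'
  rw [eq_comm, div_eq_zero_iff, sub_eq_zero, sub_eq_zero] at hc
  exact (hc.resolve_right hab.ne').symm

lemma continuousOn_log_mul_log_one_sub :
    ContinuousOn (fun x => log x * log (1 - x)) (Ioc 0 1) := by
  intro x ⟨hx0, hx1⟩
  rcases hx1.lt_or_eq with hx1 | rfl
  · exact ((continuousAt_log hx0.ne').mul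
      ((continuousAt_const.sub continuousAt_id).log (sub_pos.2 hx1).ne')).continuousWithinAt
  -- near `1`, `|log x| ≤ x⁻¹ - 1 ≤ 2 (1 - x)`, and `(1 - x) log (1 - x) → 0`
  have hbound : ∀ᶠ x in 𝓝[Ioc 0 1] 1,
      ‖log x * log (1 - x)‖ ≤ 2 * |(1 - x) * log (1 - x)| := by
    filter_upwards [self_mem_nhdsWithin,
      nhdsWithin_le_nhds (lt_mem_nhds (by norm_num : (1 / 2 : ℝ) < 1))] with x ⟨hx0, hx1⟩ hx12
    have hlog : |log x| ≤ 2 * (1 - x) := by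
      have hinv : x⁻¹ ≤ 1 + 2 * (1 - x) := by
        rw [inv_le_iff_one_le_mul₀ hx0]
        nlinarith
      rw [abs_of_nonpos (log_nonpos hx0.le hx1)]
      linarith [one_sub_inv_le_log_of_pos hx0]
    rw [norm_mul, Real.norm_eq_abs, Real.norm_eq_abs, abs_mul,
      abs_of_nonneg (sub_nonneg.2 hx1), ← mul_assoc]
    gcongr
  have hlim : Tendsto (fun x : ℝ => 2 * |(1 - x) * log (1 - x)|) (𝓝[Ioc 0 1] 1) (𝓝 0) := by
    have : Continuous fun x : ℝ => 2 * |(1 - x) * log (1 - x)| := by fun_prop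
    simpa using (this.tendsto 1).mono_left nhdsWithin_le_nhds
  simpa [ContinuousWithinAt] using squeeze_zero_norm' hbound hlim

section polylog

variable {k : ℕ} {z : ℝ}

lemma summable_one_div_nat_add_one_pow (hk : 2 ≤ k) :
    Summable fun n : ℕ => 1 / ((n : ℝ) + 1) ^ k := by
  exact_mod_cast (summable_nat_add_iff 1).2 (Real.summable_one_div_nat_pow.2 hk)

lemma norm_polylog_term_le (hz : |z| ≤ 1) (n : ℕ) :
    ‖z ^ (n + 1) / ((n : ℝ) + 1) ^ k‖ ≤ 1 / ((n : ℝ) + 1) ^ k := by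
  rw [norm_div, norm_pow, norm_pow, Real.norm_eq_abs, Real.norm_of_nonneg (by positivity)]
  gcongr
  exact pow_le_one₀ (abs_nonneg z) hz

lemma summable_polylog (hk : 2 ≤ k) (hz : |z| ≤ 1) :
    Summable fun n : ℕ => z ^ (n + 1) / ((n : ℝ) + 1) ^ k :=
  .of_norm_bounded (summable_one_div_nat_add_one_pow hk) (norm_polylog_term_le hz)

lemma continuousOn_polylog (hk : 2 ≤ k) : ContinuousOn (polylog k) (Icc (-1) 1) :=
  continuousOn_tsum (fun n => (continuousOn_pow (n + 1)).div_const _)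
    (summable_one_div_nat_add_one_pow hk) fun n _ hz => norm_polylog_term_le (abs_le.2 hz) n

@[simp]
lemma polylog_zero_right : polylog k 0 = 0 := by
  simp [polylog]

lemma polylog_one (hz : |z| < 1) : polylog 1 z = -log (1 - z) := by
  simpa [polylog] using (hasSum_pow_div_log_of_abs_lt_one hz).tsum_eq

lemma polylog_two_one : polylog 2 1 = π ^ 2 / 6 := by
  simpa [polylog] using ((hasSum_nat_add_iff' 1).2 hasSum_zeta_two).tsum_eq

lemma polylog_add_polylog_neg (hk : 2 ≤ k) (hz : |z| ≤ 1) :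
    polylog k z + polylog k (-z) = 2 / 2 ^ k * polylog k (z ^ 2) := by
  set g : ℕ → ℝ := fun n => (z ^ (n + 1) + (-z) ^ (n + 1)) / ((n : ℝ) + 1) ^ k
  have hsum : HasSum g (polylog k z + polylog k (-z)) := by
    convert (summable_polylog hk hz).hasSum.add (summable_polylog hk (by rwa [abs_neg])).hasSum
      using 1
    · ext n
      simp only [g]
      ring
    · rfl
  have heven : HasSum (fun m => g (2 * m)) 0 := by
    convert hasSum_zero with m
    simp [g, pow_succ, pow_mul]
  have hodd : HasSum (fun m => g (2 * m + 1)) (2 / 2 ^ k * polylog k (z ^ 2)) := by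
    have hz2 : |z ^ 2| ≤ 1 := by
      rw [abs_pow]
      exact pow_le_one₀ (abs_nonneg z) hz
    refine ((summable_polylog hk hz2).hasSum.mul_left (2 / 2 ^ k)).congr_fun fun m => ?_
    simp only [g]
    push_cast
    rw [show 2 * m + 1 + 1 = 2 * (m + 1) by ring]
    simp only [pow_mul, neg_sq]
    rw [show (2 * (m : ℝ) + 1 + 1) = 2 * (m + 1) by ring, mul_pow]
    field_simp
    ring
  simpa using hsum.unique (heven.even_add_odd hodd)

lemma hasDerivAt_polylog_succ (hz : |z| < 1) :
    HasDerivAt (polylog (k + 1)) (∑' n : ℕ, z ^ n / ((n : ℝ) + 1) ^ k) z := by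
  obtain ⟨r, hzr, hr1⟩ := exists_between hz
  have hr0 : 0 ≤ r := (abs_nonneg z).trans hzr.le
  refine hasDerivAt_tsum_of_isPreconnected (u := fun n : ℕ => r ^ n)
    (summable_geometric_of_lt_one hr0 hr1)
    (g := fun n y => y ^ (n + 1) / ((n : ℝ) + 1) ^ (k + 1))
    (g' := fun n y => y ^ n / ((n : ℝ) + 1) ^ k) (t := Metric.ball 0 r) Metric.isOpen_ball
    (convex_ball 0 r).isPreconnected (fun n y _ => ?_) (fun n y hy => ?_)
    (Metric.mem_ball_self ((abs_nonneg z).trans_lt hzr)) (by simp) (by simpa using hzr)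
  · refine ((hasDerivAt_pow (n + 1) y).div_const (((n : ℝ) + 1) ^ (k + 1))).congr_deriv ?_
    rw [Nat.add_sub_cancel, pow_succ _ k]
    push_cast
    field_simp
  · rw [mem_ball_zero_iff, Real.norm_eq_abs] at hy
    rw [norm_div, norm_pow, norm_pow, Real.norm_eq_abs, Real.norm_of_nonneg (by positivity)]
    calc |y| ^ n / ((n : ℝ) + 1) ^ k
        ≤ |y| ^ n := div_le_self (by positivity) (one_le_pow₀ (by simp))
      _ ≤ r ^ n := pow_le_pow_left₀ (abs_nonneg y) hy.le n

lemma hasDerivAt_polylog_succ_of_ne_zero (hz : |z| < 1) (hz0 : z ≠ 0) :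
    HasDerivAt (polylog (k + 1)) (polylog k z / z) z := by
  convert hasDerivAt_polylog_succ hz using 1
  rw [div_eq_iff hz0, polylog, ← tsum_mul_right]
  congr 1 with n
  ring

lemma hasDerivAt_polylog_two (hz : |z| < 1) (hz0 : z ≠ 0) :
    HasDerivAt (polylog 2) (-log (1 - z) / z) z := by
  simpa only [polylog_one hz] using hasDerivAt_polylog_succ_of_ne_zero (k := 1) hz hz0

end polylog

theorem polylog_two_add_polylog_two_one_sub {x : ℝ} (hx : x ∈ Ioc 0 1) :
    polylog 2 x + polylog 2 (1 - x) + log x * log (1 - x) = π ^ 2 / 6 := by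
  have hsub : Icc x 1 ⊆ Ioc 0 1 := fun y hy => ⟨hx.1.trans_le hy.1, hy.2⟩
  have hmaps : ∀ y ∈ Icc x 1, y ∈ Icc (-1) 1 ∧ 1 - y ∈ Icc (-1) 1 := fun y hy =>
    ⟨⟨by linarith [(hsub hy).1], hy.2⟩, ⟨by linarith [hy.2], by linarith [(hsub hy).1]⟩⟩
  have hcont : ContinuousOn (fun y => polylog 2 y + polylog 2 (1 - y) + log y * log (1 - y))
      (Icc x 1) :=
    (((continuousOn_polylog le_rfl).mono fun y hy => (hmaps y hy).1).add
      ((continuousOn_polylog le_rfl).comp (continuousOn_const.sub continuousOn_id)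
        fun y hy => (hmaps y hy).2)).add (continuousOn_log_mul_log_one_sub.mono hsub)
  have hderiv : ∀ y ∈ Ioo x 1, HasDerivAt
      (fun y => polylog 2 y + polylog 2 (1 - y) + log y * log (1 - y)) 0 y := by
    intro y ⟨hxy, hy1⟩
    have hy0 : 0 < y := hx.1.trans hxy
    have hy1' : 0 < 1 - y := sub_pos.2 hy1
    have hsub1 := (hasDerivAt_id y).const_sub 1
    have h1 := hasDerivAt_polylog_two (by rwa [abs_of_pos hy0]) hy0.ne'
    have h2 := (hasDerivAt_polylog_two (by rw [abs_of_pos hy1']; linarith) hy1'.ne').comp y hsub1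
    have h3 := (hasDerivAt_log hy0.ne').mul ((hasDerivAt_log hy1'.ne').comp y hsub1)
    refine ((h1.add h2).add h3).congr_deriv ?_
    rw [sub_sub_cancel, Function.comp_apply]
    field_simp
    ring
  simpa [polylog_two_one] using eq_of_hasDerivAt_zero hx.2 hcont hderiv

lemma hasDerivAt_polylog_two_landen {t : ℝ} (ht : t ∈ Ioo 0 (1 / 2)) :
    HasDerivAt (fun t => polylog 2 (t / (t - 1)) + polylog 2 t + log (1 - t) ^ 2 / 2) 0 t := by
  obtain ⟨ht0, ht12⟩ := ht
  have ht1 : 0 < 1 - t := by linarith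
  have htm1 : t - 1 ≠ 0 := by linarith
  have hz : |t / (t - 1)| < 1 := by
    rw [abs_div, abs_of_pos ht0, abs_of_neg (by linarith), div_lt_one (by linarith)]
    linarith
  have hlogz : log (1 - t / (t - 1)) = -log (1 - t) := by
    rw [← log_inv]
    congr 1
    field_simp
    ring
  have h1 := (hasDerivAt_polylog_two hz (div_ne_zero ht0.ne' htm1)).comp t
    ((hasDerivAt_id t).div ((hasDerivAt_id t).sub_const 1) htm1)
  have h2 := hasDerivAt_polylog_two (by rw [abs_of_pos ht0]; linarith) ht0.ne'
  have h3 := (((hasDerivAt_log ht1.ne').comp t ((hasDerivAt_id t).const_sub 1)).pow 2).div_const 2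
  refine ((h1.add h2).add h3).congr_deriv ?_
  simp only [hlogz, Function.comp_apply, id]
  field_simp
  ring

theorem polylog_two_landen {y : ℝ} (hy : y ∈ Icc 0 (1 / 2)) :
    polylog 2 (y / (y - 1)) + polylog 2 y + log (1 - y) ^ 2 / 2 = 0 := by
  have hmaps : ∀ t ∈ Icc 0 y, t / (t - 1) ∈ Icc (-1) 0 ∧ t ∈ Icc (-1) 1 ∧ 0 < 1 - t := by
    intro t ⟨ht0, hty⟩
    refine ⟨⟨?_, div_nonpos_of_nonneg_of_nonpos ht0 (by linarith [hy.2])⟩,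
      ⟨by linarith, by linarith [hy.2]⟩, by linarith [hy.2]⟩
    rw [le_div_iff_of_neg (by linarith [hy.2])]
    linarith [hy.2]
  have hcont : ContinuousOn
      (fun t => polylog 2 (t / (t - 1)) + polylog 2 t + log (1 - t) ^ 2 / 2) (Icc 0 y) := by
    refine (((continuousOn_polylog le_rfl).comp
      (continuousOn_id.div (continuousOn_id.sub continuousOn_const) fun t ht => ?_)
      fun t ht => Icc_subset_Icc_right (by norm_num) (hmaps t ht).1).add
      ((continuousOn_polylog le_rfl).mono fun t ht => (hmaps t ht).2.1)).add
      ((((continuousOn_const.sub continuousOn_id).log fun t ht =>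
        (hmaps t ht).2.2.ne').pow 2).div_const 2)
    simp only [Pi.sub_apply, id]
    linarith [(hmaps t ht).2.2]
  simpa using (eq_of_hasDerivAt_zero hy.1 hcont fun t ht =>
    hasDerivAt_polylog_two_landen ⟨ht.1, ht.2.trans_le hy.2⟩).symm

lemma continuousOn_polylog_three_landen : ContinuousOn (fun t => polylog 3 t + polylog 3 (1 - t)
    + polylog 3 (1 - t⁻¹) - log t ^ 3 / 6 - π ^ 2 / 6 * log t + log t ^ 2 * log (1 - t) / 2)
    (Icc (1 / 2) 1) := by
  have hmaps : ∀ t ∈ Icc (1 / 2 : ℝ) 1,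
      0 < t ∧ t ∈ Icc (-1) 1 ∧ 1 - t ∈ Icc (-1) 1 ∧ 1 - t⁻¹ ∈ Icc (-1) 1 := by
    intro t ⟨ht12, ht1⟩
    have ht0 : 0 < t := by linarith
    have hinv : t⁻¹ ≤ 2 := by
      rw [inv_le_comm₀ ht0 two_pos]
      linarith
    have hinv' : 1 ≤ t⁻¹ := (one_le_inv₀ ht0).2 ht1
    exact ⟨ht0, ⟨by linarith, ht1⟩, ⟨by linarith, by linarith⟩, ⟨by linarith, by linarith⟩⟩
  have hP := continuousOn_polylog (k := 3) (by norm_num)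
  have hlog : ContinuousOn log (Icc (1 / 2) 1) :=
    continuousOn_log.mono fun t ht => (hmaps t ht).1.ne'
  have hprod : ContinuousOn (fun t => log t ^ 2 * log (1 - t) / 2) (Icc (1 / 2) 1) :=
    ((hlog.mul (continuousOn_log_mul_log_one_sub.mono fun t ht =>
      ⟨(hmaps t ht).1, ht.2⟩)).div_const 2).congr fun t _ => by
        simp only [Pi.mul_apply]
        ring
  exact ((((hP.mono fun t ht => (hmaps t ht).2.1).add
    (hP.comp (continuousOn_const.sub continuousOn_id)
      fun t ht => (hmaps t ht).2.2.1)).add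
    (hP.comp (continuousOn_const.sub (continuousOn_inv₀.mono fun t ht =>
      (hmaps t ht).1.ne'))
      fun t ht => (hmaps t ht).2.2.2)).sub ((hlog.pow 3).div_const 6)).sub
    (hlog.const_smul (π ^ 2 / 6)) |>.add hprod

lemma hasDerivAt_polylog_three_landen {t : ℝ} (ht : t ∈ Ioo (1 / 2) 1) :
    HasDerivAt (fun t => polylog 3 t + polylog 3 (1 - t) + polylog 3 (1 - t⁻¹)
      - log t ^ 3 / 6 - π ^ 2 / 6 * log t + log t ^ 2 * log (1 - t) / 2) 0 t := by
  obtain ⟨ht12, ht1⟩ := ht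
  have ht0 : 0 < t := by linarith
  have htne : t ≠ 0 := ht0.ne'
  have ht1' : 0 < 1 - t := sub_pos.2 ht1
  have htne1 : t - 1 ≠ 0 := by linarith
  have hw : -1 < 1 - t⁻¹ ∧ 1 - t⁻¹ < 0 := by
    have : t⁻¹ < 2 := by
      rw [inv_lt_comm₀ ht0 two_pos]
      linarith
    have : 1 < t⁻¹ := (one_lt_inv₀ ht0).2 ht1
    constructor <;> linarith
  have hrefl := polylog_two_add_polylog_two_one_sub ⟨ht0, ht1.le⟩
  have hlanden := polylog_two_landen (y := 1 - t) ⟨ht1'.le, by linarith⟩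
  rw [sub_sub_cancel, show (1 - t) / (1 - t - 1) = 1 - t⁻¹ by
    rw [sub_sub_cancel_left]; field_simp; ring] at hlanden
  have hsub1 := (hasDerivAt_id t).const_sub 1
  have h1 := hasDerivAt_polylog_succ_of_ne_zero (k := 2) (by rwa [abs_of_pos ht0]) htne
  have h2 := (hasDerivAt_polylog_succ_of_ne_zero (k := 2) (by rw [abs_of_pos ht1']; linarith)
    ht1'.ne').comp t hsub1
  have h3 := (hasDerivAt_polylog_succ_of_ne_zero (k := 2) (abs_lt.2 ⟨hw.1, by linarith⟩)
    hw.2.ne).comp t ((hasDerivAt_inv htne).const_sub 1)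
  have hlog := hasDerivAt_log htne
  have h4 := ((hlog.pow 2).mul ((hasDerivAt_log ht1'.ne').comp t hsub1)).div_const 2
  refine (((((h1.add h2).add h3).sub ((hlog.pow 3).div_const 6)).sub
    (hlog.const_mul (π ^ 2 / 6))).add h4).congr_deriv ?_
  simp only [Function.comp_apply, Pi.pow_apply]
  rw [show polylog 2 t = π ^ 2 / 6 - log t * log (1 - t) - polylog 2 (1 - t) by linarith,
    show polylog 2 (1 - t⁻¹) = -polylog 2 (1 - t) - log t ^ 2 / 2 by linarith]
  field_simp
  ring

theorem polylog_three_landen {x : ℝ} (hx : x ∈ Icc (1 / 2) 1) :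
    polylog 3 x + polylog 3 (1 - x) + polylog 3 (1 - x⁻¹) =
      polylog 3 1 + log x ^ 3 / 6 + π ^ 2 / 6 * log x - log x ^ 2 * log (1 - x) / 2 := by
  have hconst := eq_of_hasDerivAt_zero hx.2
    (continuousOn_polylog_three_landen.mono (Icc_subset_Icc_left hx.1))
    fun t ht => hasDerivAt_polylog_three_landen ⟨hx.1.trans_lt ht.1, ht.2⟩
  simp only [sub_self, inv_one, log_one, polylog_zero_right] at hconst
  linarith

theorem li3_half :
    Li3 (1 / 2) = (7 / 8) * (∑' n : ℕ, 1 / ((n : ℝ) + 1) ^ 3)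
      - (Real.pi ^ 2 / 12) * Real.log 2 + (1 / 6) * Real.log 2 ^ 3 := by
  have hζ : ∑' n : ℕ, 1 / ((n : ℝ) + 1) ^ 3 = polylog 3 1 := by simp [polylog]
  have hlanden := polylog_three_landen (x := 1 / 2) ⟨le_rfl, by norm_num⟩
  have hneg := polylog_add_polylog_neg (k := 3) (z := 1) (by norm_num) (by norm_num)
  norm_num at hlanden hneg
  rw [show log (1 / 2) = -log 2 by rw [one_div, log_inv]] at hlanden
  rw [hζ]
  change polylog 3 (1 / 2) = _
  linear_combination (hlanden - hneg) / 2
end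

section
/- The double Euler sum satisfies ζ(2,1) = ζ(3), i.e. ∑_{n=1}^∞ (1/n²)·∑_{m=1}^{n−1} (1/m) = ∑_{n=1}^∞ 1/n³. -/
/-!
Euler's argument. Write `m = j + 1`, `l = k + 1`. The kernel `1 / (m l (m + l))` equals
`1 / (m (m + l)²) + 1 / (l (m + l)²)`, so by the symmetry `m ↔ l` its double sum is `2 ζ(2,1)`.
Summing over `l` first instead, `1 / (m l (m + l)) = m⁻² (1 / l - 1 / (m + l))` telescopes to
`H_m / m²`, and `H_m = H_{m-1} + 1 / m` turns `∑ H_m / m²` into `ζ(2,1) + ζ(3)`.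
-/

open Finset Filter Topology

theorem hasSum_sub_add_of_antitone {f : ℕ → ℝ} (hf : Antitone f)
    (hf0 : Tendsto f atTop (𝓝 0)) (m : ℕ) :
    HasSum (fun k ↦ f k - f (k + m)) (∑ i ∈ range m, f i) := by
  have partial_sum (K : ℕ) : ∑ k ∈ range K, (f k - f (k + m)) =
      ∑ i ∈ range m, f i - ∑ i ∈ range m, f (K + i) := by
    have h₁ := sum_range_add f K m
    have h₂ := sum_range_add f m K
    rw [add_comm m K] at h₂
    simp only [sum_sub_distrib, add_comm _ m]
    linarith
  have tail : Tendsto (fun K ↦ ∑ i ∈ range m, f (K + i)) atTop (𝓝 0) := by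
    simpa using tendsto_finsetSum (range m) fun i _ ↦ hf0.comp (tendsto_add_atTop_nat i)
  rw [hasSum_iff_tendsto_nat_of_nonneg fun k ↦ sub_nonneg.2 (hf (k.le_add_right m))]
  simpa [partial_sum] using tendsto_const_nhds.sub tail

theorem hasSum_one_div_add_sub_one_div_add {c : ℝ} (hc : 0 < c) (m : ℕ) :
    HasSum (fun k : ℕ ↦ 1 / (k + c) - 1 / (k + m + c)) (∑ i ∈ range m, 1 / (i + c)) := by
  have hanti : Antitone fun k : ℕ ↦ 1 / (k + c) := fun a b hab ↦
    one_div_le_one_div_of_le (by positivity) (by gcongr)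
  have hlim : Tendsto (fun k : ℕ ↦ 1 / (k + c)) atTop (𝓝 0) :=
    tendsto_const_nhds.div_atTop (tendsto_atTop_add_const_right _ c tendsto_natCast_atTop_atTop)
  simpa using hasSum_sub_add_of_antitone hanti hlim m

section PartialFractions

variable {K : Type*} [Field K] {a b : K}

theorem one_div_mul_mul_add_eq_add (ha : a ≠ 0) (hb : b ≠ 0) (hab : a + b ≠ 0) :
    1 / (a * b * (a + b)) = 1 / (a * (a + b) ^ 2) + 1 / (b * (b + a) ^ 2) := by
  rw [add_comm b a]
  field_simp
  ring

theorem one_div_mul_mul_add_eq_mul_sub (ha : a ≠ 0) (hb : b ≠ 0) (hab : a + b ≠ 0) :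
    1 / (a * b * (a + b)) = 1 / a ^ 2 * (1 / b - 1 / (a + b)) := by
  field_simp
  ring

end PartialFractions

theorem one_div_add_one_sq_le_one_div_sub_one_div {x : ℝ} (hx : 0 < x) :
    1 / (x + 1) ^ 2 ≤ 1 / x - 1 / (x + 1) := by
  have h : 1 / x - 1 / (x + 1) = 1 / (x * (x + 1)) := by field_simp; ring
  rw [h]
  exact one_div_le_one_div_of_le (by positivity) (by nlinarith)

-- With `m = j + 1`, `n = m + (k + 1)`, `(j, k) ↦ 1 / (m n²)` enumerates the terms of `ζ(2,1)`.
noncomputable def doubleZetaTerm (p : ℕ × ℕ) : ℝ :=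
  1 / ((p.1 + 1) * ((p.1 + 1) + (p.2 + 1)) ^ 2)

noncomputable def eulerKernel (p : ℕ × ℕ) : ℝ :=
  1 / ((p.1 + 1) * (p.2 + 1) * ((p.1 + 1) + (p.2 + 1)))

theorem doubleZetaTerm_nonneg (p : ℕ × ℕ) : 0 ≤ doubleZetaTerm p := by
  unfold doubleZetaTerm; positivity

theorem eulerKernel_eq_add_swap (p : ℕ × ℕ) :
    eulerKernel p = doubleZetaTerm p + doubleZetaTerm p.swap :=
  one_div_mul_mul_add_eq_add (by positivity) (by positivity) (by positivity)

theorem hasSum_eulerKernel_right (j : ℕ) :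
    HasSum (fun k ↦ eulerKernel (j, k)) (1 / ((j : ℝ) + 1) ^ 2 * harmonic (j + 1)) := by
  have h :=
    (hasSum_one_div_add_sub_one_div_add one_pos (j + 1)).mul_left (1 / ((j : ℝ) + 1) ^ 2)
  have hH : (harmonic (j + 1) : ℝ) = ∑ i ∈ range (j + 1), 1 / ((i : ℝ) + 1) := by
    simp [harmonic]
  rw [hH]
  refine h.congr_fun fun k ↦ ?_
  rw [eulerKernel, one_div_mul_mul_add_eq_mul_sub (by positivity) (by positivity) (by positivity)]
  push_cast
  ring

theorem doubleZetaTerm_le_one_div_mul_sub (j k : ℕ) :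
    doubleZetaTerm (j, k) ≤
      1 / ((j : ℝ) + 1) * (1 / (k + (j + 1)) - 1 / (k + 1 + (j + 1))) := by
  have h := one_div_add_one_sq_le_one_div_sub_one_div (x := k + (j + 1)) (by positivity)
  calc doubleZetaTerm (j, k) = 1 / ((j : ℝ) + 1) * (1 / (k + (j + 1) + 1) ^ 2) := by
        dsimp only [doubleZetaTerm]; rw [one_div_mul_one_div]; ring
    _ ≤ _ := by gcongr; exact h.trans_eq (by ring)

theorem hasSum_one_div_mul_sub_one_div_add_one (j : ℕ) :
    HasSum (fun k : ℕ ↦ 1 / ((j : ℝ) + 1) * (1 / (k + (j + 1)) - 1 / (k + 1 + (j + 1))))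
      (1 / ((j : ℝ) + 1) ^ 2) := by
  simpa [sq] using
    (hasSum_one_div_add_sub_one_div_add (c := (j : ℝ) + 1) (by positivity) 1).mul_left
      (1 / ((j : ℝ) + 1))

theorem summable_doubleZetaTerm_right (j : ℕ) : Summable fun k ↦ doubleZetaTerm (j, k) :=
  (hasSum_one_div_mul_sub_one_div_add_one j).summable.of_nonneg_of_le
    (fun _ ↦ doubleZetaTerm_nonneg _) (doubleZetaTerm_le_one_div_mul_sub j)

theorem tsum_doubleZetaTerm_right_le (j : ℕ) :
    ∑' k, doubleZetaTerm (j, k) ≤ 1 / ((j : ℝ) + 1) ^ 2 :=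
  hasSum_le (doubleZetaTerm_le_one_div_mul_sub j) (summable_doubleZetaTerm_right j).hasSum
    (hasSum_one_div_mul_sub_one_div_add_one j)

theorem summable_one_div_add_one_sq : Summable fun n : ℕ ↦ 1 / ((n : ℝ) + 1) ^ 2 := by
  simpa using (summable_nat_add_iff 1).2 (Real.summable_one_div_nat_pow.2 one_lt_two)

theorem summable_doubleZetaTerm : Summable doubleZetaTerm := by
  rw [summable_prod_of_nonneg fun p ↦ doubleZetaTerm_nonneg p]
  exact ⟨summable_doubleZetaTerm_right, summable_one_div_add_one_sq.of_nonneg_of_le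
    (fun _ ↦ tsum_nonneg fun _ ↦ doubleZetaTerm_nonneg _) tsum_doubleZetaTerm_right_le⟩

theorem hasSum_eulerKernel : HasSum eulerKernel (2 * ∑' p, doubleZetaTerm p) := by
  have h := summable_doubleZetaTerm.hasSum
  have hswap := (Equiv.prodComm ℕ ℕ).hasSum_iff.mpr h
  rw [two_mul]
  exact (h.add hswap).congr_fun eulerKernel_eq_add_swap

theorem HasSum.sum_antidiagonal {A α : Type*} [AddCommMonoid A] [HasAntidiagonal A]
    [AddCommMonoid α] [TopologicalSpace α] [ContinuousAdd α] [RegularSpace α]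
    {f : A × A → α} {a : α} (hf : HasSum f a) :
    HasSum (fun n ↦ ∑ p ∈ antidiagonal n, f p) a :=
  (HasAntidiagonal.sigmaAntidiagonalEquivProd.hasSum_iff.mpr hf).sigma fun n ↦
    (antidiagonal n).hasSum f

theorem sum_antidiagonal_doubleZetaTerm (n : ℕ) :
    ∑ p ∈ antidiagonal n, doubleZetaTerm p =
      1 / (((n + 1 : ℕ) : ℝ) + 1) ^ 2 * harmonic (n + 1) := by
  have hterm (p : ℕ × ℕ) (hp : p ∈ antidiagonal n) :
      doubleZetaTerm p = 1 / (((n + 1 : ℕ) : ℝ) + 1) ^ 2 * (1 / ((p.1 : ℝ) + 1)) := by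
    rw [HasAntidiagonal.mem_antidiagonal] at hp
    have hsum : ((p.1 : ℝ) + 1) + ((p.2 : ℝ) + 1) = ((n + 1 : ℕ) : ℝ) + 1 := by
      rw [← hp]; push_cast; ring
    rw [doubleZetaTerm, hsum, one_div_mul_one_div, mul_comm]
  rw [sum_congr rfl hterm, ← mul_sum, Nat.sum_antidiagonal_eq_sum_range_succ_mk]
  simp [harmonic]

theorem hasSum_one_div_sq_mul_harmonic :
    HasSum (fun n : ℕ ↦ 1 / ((n : ℝ) + 1) ^ 2 * harmonic n) (∑' p, doubleZetaTerm p) := by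
  rw [← hasSum_nat_add_iff' 1]
  simpa [sum_antidiagonal_doubleZetaTerm] using summable_doubleZetaTerm.hasSum.sum_antidiagonal

theorem zeta_2_1_eq_zeta_3 :
    ∑' n : ℕ, (1 / ((n : ℝ) + 1) ^ 2) * ∑ m ∈ Finset.Icc 1 n, (1 / (m : ℝ)) =
      ∑' n : ℕ, 1 / ((n : ℝ) + 1) ^ 3 := by
  set Z := ∑' p, doubleZetaTerm p
  have hζ21 : HasSum (fun n : ℕ ↦ 1 / ((n : ℝ) + 1) ^ 2 * harmonic n) Z :=
    hasSum_one_div_sq_mul_harmonic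
  have hζ21_add_ζ3 :
      HasSum (fun n : ℕ ↦ 1 / ((n : ℝ) + 1) ^ 2 * harmonic n + 1 / ((n : ℝ) + 1) ^ 3)
        (2 * Z) :=
    (hasSum_eulerKernel.prod_fiberwise hasSum_eulerKernel_right).congr_fun fun n ↦ by
      rw [harmonic_succ]; push_cast; field_simp
  have hζ3 : HasSum (fun n : ℕ ↦ 1 / ((n : ℝ) + 1) ^ 3) Z := by
    simpa [two_mul] using hζ21_add_ζ3.sub hζ21
  have hH (n : ℕ) : ∑ m ∈ Icc 1 n, 1 / (m : ℝ) = harmonic n := by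
    simp [harmonic_eq_sum_Icc]
  simp_rw [hH]
  rw [hζ21.tsum_eq, hζ3.tsum_eq]
end
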